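/- Let (X, m_s) be a complete M_s-metric space and T : X → X a self mapping such that m_s(Tx, Ty, Tz) ≤ m_s(x,y,z) − φ(m_s(x,y,z)) for all x, y, z ∈ X, where φ : [0,∞) → [0,∞) is continuous, non-decreasing, φ(t) = 0 if and only if t = 0, and φ(t) > 0 for all t > 0. Then T has a unique fixed point in X. -/

import Mathlib

open Filter Topology

/-- `msmin m x y z = min {m(x,x,x), m(y,y,y), m(z,z,z)}`. -/
def msmin {X : Type*} (m : X → X → X → ℝ) (x y z : X) : ℝ :=
  min (m x x x) (min (m y y y) (m z z z))

/-- `msmax m x y z = max {m(x,x,x), m(y,y,y), m(z,z,z)}`. -/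
def msmax {X : Type*} (m : X → X → X → ℝ) (x y z : X) : ℝ :=
  max (m x x x) (max (m y y y) (m z z z))

/-- `m` is an `Mₛ`-metric on `X`. -/
structure IsMsMetric {X : Type*} (m : X → X → X → ℝ) : Prop where
  nonneg : ∀ x y z, 0 ≤ m x y z
  eq_iff : ∀ x y, (m x x x = m y y y ∧ m y y y = m x x y) ↔ x = y
  min_le : ∀ x y z, msmin m x y z ≤ m x y z
  symm : ∀ x y, m x x y = m y y x
  ineq : ∀ x y z t, m x y z - msmin m x y z ≤
    (m x x t - msmin m x x t) + (m y y t - msmin m y y t) + (m z z t - msmin m z z t)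

/-- A sequence `x` converges to `a` in the `Mₛ`-metric sense. -/
def MsConvergesTo {X : Type*} (m : X → X → X → ℝ) (x : ℕ → X) (a : X) : Prop :=
  Tendsto (fun n => m (x n) (x n) a - msmin m (x n) (x n) a) atTop (nhds 0)

/-- A sequence `x` is `Mₛ`-Cauchy: the two double limits exist (and are finite). -/
def MsCauchy {X : Type*} (m : X → X → X → ℝ) (x : ℕ → X) : Prop :=
  (∃ L : ℝ, Tendsto
      (fun p : ℕ × ℕ => m (x p.1) (x p.1) (x p.2) - msmin m (x p.1) (x p.1) (x p.2))
      atTop (nhds L)) ∧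
  (∃ L : ℝ, Tendsto
      (fun p : ℕ × ℕ => msmax m (x p.1) (x p.1) (x p.2) - msmin m (x p.1) (x p.1) (x p.2))
      atTop (nhds L))

/-- The `Mₛ`-metric space `(X, m)` is complete. -/
def MsComplete {X : Type*} (m : X → X → X → ℝ) : Prop :=
  ∀ x : ℕ → X, MsCauchy m x → ∃ a : X,
    Tendsto (fun n => m (x n) (x n) a - msmin m (x n) (x n) a) atTop (nhds 0) ∧
    Tendsto (fun n => msmax m (x n) (x n) a - msmin m (x n) (x n) a) atTop (nhds 0)

/-!
Along an orbit of `T` every quantity `uₙ = m(Tⁿ x, Tⁿ y, Tⁿ z)` satisfies `uₙ₊₁ ≤ uₙ - φ(uₙ)`,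
so it decreases to `0` because `φ` is positive away from `0`; in particular `m(xₙ, xₙ, xₙ)` and
`m(xₙ, xₙ, xₙ₊₁)` tend to `0`. The inequality `m(x, x, z) ≤ m(x, x, x) + 2 m(x, x, t) + m(t, t, z)`
and the monotonicity of `φ` then keep all of `m(x_N, x_N, x_{N+k})` small once those two
quantities are small at `N`, so the orbit is `Mₛ`-Cauchy. Its limit `a` has `m(a, a, a) = 0`, and
`xₙ₊₁` converges to both `a` and `T a`, which forces `T a = a`. Fixed points `u, v` satisfy
`t ≤ t - φ(t)` for `t = m(u, u, v)`, so `m(u, u, v) = 0`, and similarly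
`m(u, u, u) = m(v, v, v) = 0`.
-/

open Function

namespace IsMsMetric

variable {X : Type*} {m : X → X → X → ℝ}

lemma msmin_nonneg (hm : IsMsMetric m) (x y z : X) : 0 ≤ msmin m x y z :=
  le_min (hm.nonneg _ _ _) (le_min (hm.nonneg _ _ _) (hm.nonneg _ _ _))

lemma le_self_add_two_mul_add (hm : IsMsMetric m) (x z t : X) :
    m x x z ≤ m x x x + 2 * m x x t + m t t z := by
  have hineq := hm.ineq x x z t
  have hmin : msmin m x x z ≤ m x x x := min_le_left _ _
  have hxt := hm.msmin_nonneg x x t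
  have hzt := hm.msmin_nonneg z z t
  rw [hm.symm z t] at hineq
  linarith

lemma eq_of_eq_zero {x y : X} (hm : IsMsMetric m) (hx : m x x x = 0) (hy : m y y y = 0)
    (hxy : m x x y = 0) : x = y :=
  (hm.eq_iff x y).mp ⟨hx.trans hy.symm, hy.trans hxy.symm⟩

lemma eq_of_tendsto {x : ℕ → X} {a b : X} (hm : IsMsMetric m) (ha : m a a a = 0)
    (hb : m b b b = 0) (hxa : Tendsto (fun n => m (x n) (x n) a) atTop (𝓝 0))
    (hxb : Tendsto (fun n => m (x n) (x n) b) atTop (𝓝 0)) : a = b := by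
  have hbound : Tendsto (fun n => m a a a + 2 * m (x n) (x n) a + m (x n) (x n) b) atTop
      (𝓝 0) := by
    simpa [ha] using (hxa.const_mul 2).const_add (m a a a) |>.add hxb
  have hab : m a a b ≤ 0 := by
    refine ge_of_tendsto' hbound fun n => ?_
    simpa only [hm.symm a (x n)] using hm.le_self_add_two_mul_add a b (x n)
  exact hm.eq_of_eq_zero ha hb (hab.antisymm (hm.nonneg _ _ _))

end IsMsMetric

lemma MsComplete.exists_tendsto {X : Type*} {m : X → X → X → ℝ} (hcomp : MsComplete m)
    (hm : IsMsMetric m) {x : ℕ → X} (hx : MsCauchy m x)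
    (hdiag : Tendsto (fun n => m (x n) (x n) (x n)) atTop (𝓝 0)) :
    ∃ a, m a a a = 0 ∧ Tendsto (fun n => m (x n) (x n) a) atTop (𝓝 0) := by
  obtain ⟨a, hconv, hspread⟩ := hcomp x hx
  have hmin : Tendsto (fun n => msmin m (x n) (x n) a) atTop (𝓝 0) := by
    have := hdiag.min (hdiag.min (tendsto_const_nhds (x := m a a a)))
    rwa [min_eq_left (hm.nonneg a a a), min_self] at this
  have hmax : Tendsto (fun n => msmax m (x n) (x n) a) atTop (𝓝 (m a a a)) := by
    have := hdiag.max (hdiag.max (tendsto_const_nhds (x := m a a a)))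
    rwa [max_eq_right (hm.nonneg a a a), max_eq_right (hm.nonneg a a a)] at this
  refine ⟨a, tendsto_nhds_unique (by simpa using hmax.sub hmin) hspread, ?_⟩
  simpa using hconv.add hmin

structure IsControlFunction (phi : ℝ → ℝ) : Prop where
  nonneg : ∀ t, 0 ≤ t → 0 ≤ phi t
  monotoneOn : MonotoneOn phi (Set.Ici 0)
  pos : ∀ t, 0 < t → 0 < phi t

namespace IsControlFunction

variable {phi : ℝ → ℝ}

lemma eq_zero_of_le_sub {t : ℝ} (hφ : IsControlFunction phi) (ht : 0 ≤ t)
    (h : t ≤ t - phi t) : t = 0 := by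
  by_contra hne
  linarith [hφ.pos t (ht.lt_of_ne' hne)]

lemma tendsto_zero_of_le_sub {u : ℕ → ℝ} (hφ : IsControlFunction phi) (hu0 : ∀ n, 0 ≤ u n)
    (hu : ∀ n, u (n + 1) ≤ u n - phi (u n)) : Tendsto u atTop (𝓝 0) := by
  have hanti : Antitone u :=
    antitone_nat_of_succ_le fun n => by linarith [hu n, hφ.nonneg _ (hu0 n)]
  have hbdd : BddBelow (Set.range u) := ⟨0, by rintro _ ⟨n, rfl⟩; exact hu0 n⟩
  have hlim : Tendsto u atTop (𝓝 (⨅ n, u n)) := tendsto_atTop_ciInf hanti hbdd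
  set r := ⨅ n, u n
  have hr0 : 0 ≤ r := le_ciInf hu0
  have hdiff : Tendsto (fun n => u n - u (n + 1)) atTop (𝓝 0) := by
    simpa using hlim.sub (hlim.comp (tendsto_add_atTop_nat 1))
  -- each step decreases `u` by at least `φ r`, since `u n ≥ r`
  have hφr : phi r ≤ 0 := by
    refine ge_of_tendsto' hdiff fun n => ?_
    have := hφ.monotoneOn (Set.mem_Ici.mpr hr0) (Set.mem_Ici.mpr (hu0 n)) (ciInf_le hbdd n)
    linarith [hu n]
  have hr : r = 0 := hr0.eq_or_lt.elim Eq.symm fun hpos => absurd hφr (hφ.pos r hpos).not_ge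
  rwa [hr] at hlim

end IsControlFunction

def IsPhiContraction {X : Type*} (m : X → X → X → ℝ) (phi : ℝ → ℝ) (T : X → X) : Prop :=
  ∀ x y z, m (T x) (T y) (T z) ≤ m x y z - phi (m x y z)

namespace IsPhiContraction

variable {X : Type*} {m : X → X → X → ℝ} {phi : ℝ → ℝ} {T : X → X}

lemma map_le (hT : IsPhiContraction m phi T) (hm : IsMsMetric m) (hφ : IsControlFunction phi)
    (x y z : X) : m (T x) (T y) (T z) ≤ m x y z := by
  linarith [hT x y z, hφ.nonneg _ (hm.nonneg x y z)]

lemma iterate_le (hT : IsPhiContraction m phi T) (hm : IsMsMetric m)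
    (hφ : IsControlFunction phi) (x y z : X) (j : ℕ) :
    m (T^[j] x) (T^[j] y) (T^[j] z) ≤ m x y z := by
  induction j with
  | zero => rfl
  | succ j ih =>
    simp only [iterate_succ_apply']
    exact (hT.map_le hm hφ _ _ _).trans ih

lemma tendsto_iterate (hT : IsPhiContraction m phi T) (hm : IsMsMetric m)
    (hφ : IsControlFunction phi) (x y z : X) :
    Tendsto (fun n => m (T^[n] x) (T^[n] y) (T^[n] z)) atTop (𝓝 0) :=
  hφ.tendsto_zero_of_le_sub (fun _ => hm.nonneg _ _ _) fun n => by
    simpa only [iterate_succ_apply'] using hT _ _ _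

lemma eq_of_isFixedPt {x y : X} (hT : IsPhiContraction m phi T) (hm : IsMsMetric m)
    (hφ : IsControlFunction phi) (hx : IsFixedPt T x) (hy : IsFixedPt T y) : x = y := by
  have hzero : ∀ a b c, IsFixedPt T a → IsFixedPt T b → IsFixedPt T c → m a b c = 0 :=
    fun a b c ha hb hc => hφ.eq_zero_of_le_sub (hm.nonneg a b c)
      (by simpa only [ha.eq, hb.eq, hc.eq] using hT a b c)
  exact hm.eq_of_eq_zero (hzero x x x hx hx hx) (hzero y y y hy hy hy) (hzero x x y hx hx hy)

lemma orbit_le_of_step_le {y : X} {r : ℝ} (hT : IsPhiContraction m phi T) (hm : IsMsMetric m)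
    (hφ : IsControlFunction phi) (hr : m y y y + 2 * m y y (T y) ≤ r)
    (hphi : m y y y + 2 * m y y (T y) ≤ phi r) (k : ℕ) : m y y (T^[k] y) ≤ 2 * r := by
  have hr0 : 0 ≤ r := by linarith [hm.nonneg y y y, hm.nonneg y y (T y)]
  induction k with
  | zero => linarith [hm.nonneg y y (T y), show m y y (T^[0] y) = m y y y from rfl]
  | succ k ih =>
    set D := m y y (T^[k] y)
    have hstep : m y y (T^[k + 1] y) ≤ m y y y + 2 * m y y (T y) + (D - phi D) := by
      have := hm.le_self_add_two_mul_add y (T^[k + 1] y) (T y)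
      rw [iterate_succ_apply'] at this ⊢
      linarith [hT y y (T^[k] y)]
    -- once `D > r`, the decrease `φ D ≥ φ r` absorbs the error term
    rcases le_or_gt D r with hD | hD
    · linarith [hφ.nonneg D (hm.nonneg _ _ _)]
    · linarith [hφ.monotoneOn (Set.mem_Ici.mpr hr0) (Set.mem_Ici.mpr (hr0.trans hD.le)) hD.le]

lemma tendsto_orbit (hT : IsPhiContraction m phi T) (hm : IsMsMetric m)
    (hφ : IsControlFunction phi) (x : X) :
    Tendsto (fun pq : ℕ × ℕ => m (T^[pq.1] x) (T^[pq.1] x) (T^[pq.2] x)) atTop (𝓝 0) := by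
  refine Metric.tendsto_atTop.2 fun ε hε => ?_
  set δ := min (ε / 4) (phi (ε / 4))
  have hδ : 0 < δ := lt_min (by linarith) (hφ.pos _ (by linarith))
  have hstep : Tendsto (fun n => m (T^[n] x) (T^[n] x) (T^[n] x) +
      2 * m (T^[n] x) (T^[n] x) (T^[n] (T x))) atTop (𝓝 0) := by
    simpa using (hT.tendsto_iterate hm hφ x x x).add
      ((hT.tendsto_iterate hm hφ x x (T x)).const_mul 2)
  obtain ⟨N, hN⟩ := (hstep.eventually_lt_const hδ).exists
  simp only [← iterate_succ_apply, iterate_succ_apply'] at hN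
  have hbound : ∀ j q, j + N ≤ q → m (T^[j + N] x) (T^[j + N] x) (T^[q] x) ≤ 2 * (ε / 4) := by
    intro j q hq
    obtain ⟨k, rfl⟩ := Nat.exists_eq_add_of_le' hq
    rw [show k + (j + N) = j + (k + N) by omega]
    simp only [iterate_add_apply]
    exact (hT.iterate_le hm hφ _ _ _ j).trans
      (hT.orbit_le_of_step_le hm hφ (hN.le.trans (min_le_left _ _))
        (hN.le.trans (min_le_right _ _)) k)
  refine ⟨(N, N), fun ⟨p, q⟩ ⟨hp, hq⟩ => ?_⟩
  rw [Real.dist_eq, sub_zero, abs_of_nonneg (hm.nonneg _ _ _)]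
  obtain ⟨j, rfl⟩ := Nat.exists_eq_add_of_le' hp
  rcases le_total (j + N) q with hpq | hqp
  · linarith [hbound j q hpq]
  · obtain ⟨i, rfl⟩ := Nat.exists_eq_add_of_le' hq
    rw [hm.symm]
    linarith [hbound i _ hqp]

lemma msCauchy_orbit (hT : IsPhiContraction m phi T) (hm : IsMsMetric m)
    (hφ : IsControlFunction phi) (x : X) : MsCauchy m fun n => T^[n] x := by
  have hdiag := hT.tendsto_iterate hm hφ x x x
  rw [MsCauchy, ← prod_atTop_atTop_eq]
  have hfst := hdiag.comp (tendsto_fst (f := atTop) (g := (atTop : Filter ℕ)))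
  have hsnd := hdiag.comp (tendsto_snd (f := (atTop : Filter ℕ)) (g := atTop))
  have hmin : Tendsto (fun pq : ℕ × ℕ => msmin m (T^[pq.1] x) (T^[pq.1] x) (T^[pq.2] x))
      (atTop ×ˢ atTop) (𝓝 0) := by
    have := hfst.min (hfst.min hsnd)
    rw [min_self, min_self] at this
    exact this
  have hmax : Tendsto (fun pq : ℕ × ℕ => msmax m (T^[pq.1] x) (T^[pq.1] x) (T^[pq.2] x))
      (atTop ×ˢ atTop) (𝓝 0) := by
    have := hfst.max (hfst.max hsnd)
    rw [max_self, max_self] at this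
    exact this
  have horbit := hT.tendsto_orbit hm hφ x
  rw [← prod_atTop_atTop_eq] at horbit
  exact ⟨⟨0, by simpa using horbit.sub hmin⟩, ⟨0, by simpa using hmax.sub hmin⟩⟩

lemma isFixedPt_of_tendsto {x a : X} (hT : IsPhiContraction m phi T) (hm : IsMsMetric m)
    (hφ : IsControlFunction phi) (ha : m a a a = 0)
    (hxa : Tendsto (fun n => m (T^[n] x) (T^[n] x) a) atTop (𝓝 0)) :
    IsFixedPt T a := by
  have hTa : m (T a) (T a) (T a) = 0 :=
    le_antisymm (ha ▸ hT.map_le hm hφ a a a) (hm.nonneg _ _ _)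
  have hxTa : Tendsto (fun n => m (T^[n + 1] x) (T^[n + 1] x) (T a)) atTop (𝓝 0) := by
    refine squeeze_zero (fun n => hm.nonneg _ _ _) (fun n => ?_) hxa
    simpa only [iterate_succ_apply'] using hT.map_le hm hφ _ _ a
  exact hm.eq_of_tendsto hTa ha hxTa (hxa.comp (tendsto_add_atTop_nat 1))

end IsPhiContraction

theorem fixedPoint_of_phiContraction_general {X : Type*} [Nonempty X] (m : X → X → X → ℝ)
    (hm : IsMsMetric m) (hcomp : MsComplete m) (T : X → X) (phi : ℝ → ℝ)
    (hphi_nonneg : ∀ t, 0 ≤ t → 0 ≤ phi t)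
    (hphi_mono : MonotoneOn phi (Set.Ici 0))
    (hphi_pos : ∀ t, 0 < t → 0 < phi t)
    (hT : ∀ x y z, m (T x) (T y) (T z) ≤ m x y z - phi (m x y z)) :
    ∃! u : X, T u = u := by
  obtain ⟨x⟩ := ‹Nonempty X›
  have hT : IsPhiContraction m phi T := hT
  have hφ : IsControlFunction phi := ⟨hphi_nonneg, hphi_mono, hphi_pos⟩
  obtain ⟨a, ha, hxa⟩ :=
    hcomp.exists_tendsto hm (hT.msCauchy_orbit hm hφ x) (hT.tendsto_iterate hm hφ x x x)
  have hfix := hT.isFixedPt_of_tendsto hm hφ ha hxa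
  exact ⟨a, hfix, fun b hb => hT.eq_of_isFixedPt hm hφ hb hfix⟩

/-- Theorem 3 (weak φ-contraction in a complete Mₛ-metric space): `T` has a unique
fixed point. -/
theorem fixedPoint_of_phiContraction {X : Type*} [Nonempty X] (m : X → X → X → ℝ)
    (hm : IsMsMetric m) (hcomp : MsComplete m) (T : X → X) (phi : ℝ → ℝ)
    (hphi_nonneg : ∀ t, 0 ≤ t → 0 ≤ phi t)
    (hphi_cont : ContinuousOn phi (Set.Ici 0))
    (hphi_mono : MonotoneOn phi (Set.Ici 0))
    (hphi_zero : ∀ t, 0 ≤ t → (phi t = 0 ↔ t = 0))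
    (hphi_pos : ∀ t, 0 < t → 0 < phi t)
    (hT : ∀ x y z, m (T x) (T y) (T z) ≤ m x y z - phi (m x y z)) :
    ∃! u : X, T u = u :=
  fixedPoint_of_phiContraction_general m hm hcomp T phi hphi_nonneg hphi_mono hphi_pos hT
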